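/- Let p be an odd prime, γ a self-conjugate p-core, and let 0 ≤ i ≤ j ≤ p−1 with i < p−1. Then ∂⌈i,j⌋ = j − i − 1 + γ_{ij}; that is, for every sequence of two p-rim-hook removals starting at ⌈i,j⌋ and ending at γ, with leg lengths l_1 and l_2, one has |l_1 − l_2| = j − i − 1 + γ_{ij}, where γ_{ij} is the corresponding pyramid entry. -/

import Mathlib

/-!
On the `p`-abacus of the core `γ` every runner is full up to its last bead `ρ k`, since the
beta-set of a `p`-core is closed under `b ↦ b - p`. The beta-set of `⌈i,j⌋` arises from that of
`γ` by moving beads up by `2p` in total, and the two hook removals must undo these moves: the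
intermediate partition has a single last bead `ρ w` moved up by `p`, and each leg length counts
the beads in a window `(a, a + p)`. Such a window holds one position of every residue other than
that of `a`, and that position is a bead iff the runner's last bead lies beyond `a`; so both legs
are determined by the position of `ρ i + p`, `ρ j - p`, ... among the `ρ k`, which is exactly what
the pyramid entries record.
-/

namespace ArxivW2

/-- A partition of a natural number, given by its (weakly decreasing, finitely
supported) sequence of parts, `part i` being the `(i+1)`-st part. -/
structure PartitionNat : Type where
  part : ℕ → ℕ
  antitone : Antitone part
  finite_support : (Function.support part).Finite

namespace PartitionNat

/-- The rank `|λ|` of a partition: the sum of its parts. -/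
noncomputable def size (μ : PartitionNat) : ℕ := ∑ᶠ i, μ.part i

/-- The number of nonzero parts of a partition. -/
noncomputable def len (μ : PartitionNat) : ℕ := (Function.support μ.part).ncard

/-- The `(j+1)`-st part of the conjugate partition: `λ'_{j+1} = #{i : λ_i ≥ j+1}`. -/
noncomputable def conj (μ : PartitionNat) (j : ℕ) : ℕ := {i : ℕ | j + 1 ≤ μ.part i}.ncard

/-- A partition is self-conjugate if it equals its conjugate. -/
def SelfConj (μ : PartitionNat) : Prop := ∀ j, μ.part j = μ.conj j

/-- `(i, j)` (0-indexed) is a node of the Young diagram of `μ`. -/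
def IsNode (μ : PartitionNat) (i j : ℕ) : Prop := j < μ.part i

/-- The hook length of the (0-indexed) node `(i,j)`:
`h = λ_{i+1} + λ'_{j+1} − (i+1) − (j+1) + 1`. -/
noncomputable def hook (μ : PartitionNat) (i j : ℕ) : ℕ := μ.part i + μ.conj j - (i + j + 1)

/-- A partition is a `p`-core if no hook length of a node is divisible by `p`. -/
def IsCore (p : ℕ) (μ : PartitionNat) : Prop := ∀ i j, μ.IsNode i j → ¬ p ∣ μ.hook i j

/-- The `p`-weight of a partition: the number of nodes whose hook length is
divisible by `p`. -/
noncomputable def pweight (p : ℕ) (μ : PartitionNat) : ℕ :=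
  {x : ℕ × ℕ | μ.IsNode x.1 x.2 ∧ p ∣ μ.hook x.1 x.2}.ncard

/-- The `N`-bead beta-set `B_N(λ) = {λ_i + N − i : 1 ≤ i ≤ N}` of a partition
(meaningful when `N ≥ len λ`). -/
def betaSet (N : ℕ) (μ : PartitionNat) : Finset ℕ :=
  (Finset.range N).image fun i => μ.part i + (N - 1 - i)

/-- A partition is `p`-regular if no nonzero part is repeated `p` or more times. -/
def Regular (p : ℕ) (μ : PartitionNat) : Prop :=
  ∀ i, μ.part i ≠ 0 → μ.part (i + p - 1) < μ.part i

end PartitionNat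

open PartitionNat

/-- `γ` is the `p`-core of `lam`: `γ` is a `p`-core, and for some `N` at least the
number of parts of both, the `N`-bead beta-sets of `lam` and `γ` have the same number
of elements in each residue class mod `p`. -/
def HasCore (p : ℕ) (lam gam : PartitionNat) : Prop :=
  IsCore p gam ∧ ∃ N : ℕ, lam.len ≤ N ∧ gam.len ≤ N ∧ ∀ r : ℕ,
    ((betaSet N lam).filter fun b => b % p = r).card =
      ((betaSet N gam).filter fun b => b % p = r).card

/-- Membership in the `p`-block of weight `w` with `p`-core `gam`. -/
def InBlock (p w : ℕ) (gam lam : PartitionNat) : Prop :=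
  lam.size = gam.size + w * p ∧ HasCore p lam gam

/-- The dominance order: `lam ⊴ mu`. -/
def Dom (lam mu : PartitionNat) : Prop :=
  ∀ k : ℕ, ∑ i ∈ Finset.range k, lam.part i ≤ ∑ i ∈ Finset.range k, mu.part i

/-- `mu` is obtained from `lam` by removing a `p`-rim-hook of leg length `l`. -/
def RemoveHook (p : ℕ) (lam mu : PartitionNat) (l : ℕ) : Prop :=
  ∃ N b : ℕ, lam.len ≤ N ∧ mu.len ≤ N ∧ b ∈ betaSet N lam ∧ p ≤ b ∧
    b - p ∉ betaSet N lam ∧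
    betaSet N mu = insert (b - p) (betaSet N lam \ {b}) ∧
    l = ((betaSet N lam).filter fun x => b - p < x ∧ x < b).card

/-- `lam` belongs to the set `∂_l` of the weight-2 block of `gam`:
it lies in the block and some (equivalently, every) two-step `p`-rim-hook removal
sequence from `lam` down to `gam` has leg lengths `l₁, l₂` with `|l₁ − l₂| = l`. -/
def DelClass (p : ℕ) (gam : PartitionNat) (l : ℕ) (lam : PartitionNat) : Prop :=
  InBlock p 2 gam lam ∧ ∃ mu l1 l2, RemoveHook p lam mu l1 ∧ RemoveHook p mu gam l2 ∧
    max l1 l2 - min l1 l2 = l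

/-- `ρ 0 < ρ 1 < ⋯ < ρ (p−1)` is the increasing enumeration of the maxima of the
residue classes mod `p` in the `N`-bead beta-set of `gam`. -/
def IsRho (p N : ℕ) (gam : PartitionNat) (ρ : ℕ → ℕ) : Prop :=
  (∀ i j, i < j → j < p → ρ i < ρ j) ∧
  (∀ i, i < p → ρ i ∈ betaSet N gam ∧ ∀ b ∈ betaSet N gam, b % p = ρ i % p → b ≤ ρ i) ∧
  (∀ r, r < p → ∃ i, i < p ∧ ρ i % p = r)

/-- The beta-set of the partition `⟨i,j⟩` (`i < j`). -/
def pairBeta (p : ℕ) (B : Finset ℕ) (ρ : ℕ → ℕ) (i j : ℕ) : Finset ℕ :=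
  (B \ {ρ i, ρ j}) ∪ {ρ i + p, ρ j + p}

/-- The beta-set of the partition `⟨i⟩`. -/
def oneBeta (p : ℕ) (B : Finset ℕ) (ρ : ℕ → ℕ) (i : ℕ) : Finset ℕ :=
  (B \ {ρ i}) ∪ {ρ i + 2 * p}

/-- The beta-set of the partition `⟨i²⟩`. -/
def sqBeta (p : ℕ) (B : Finset ℕ) (ρ : ℕ → ℕ) (i : ℕ) : Finset ℕ :=
  (B \ {ρ i - p}) ∪ {ρ i + p}

/-- The pyramid entry `γ_{ij}` of the block, extended by `1` for `i > j` and `0`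
for `j ≥ p`. -/
def pyr (p : ℕ) (ρ : ℕ → ℕ) (i j : ℕ) : ℕ :=
  if j < i then 1 else if p ≤ j then 0 else if ρ j - ρ i < p then 1 else 0

/-- The beta-set of Fayers' partition `⌈i,j⌋` (for `0 ≤ i ≤ j ≤ p−1`, `i < p−1`),
defined by cases on the pyramid entries. -/
def fayersBeta (p : ℕ) (B : Finset ℕ) (ρ : ℕ → ℕ) (i j : ℕ) : Finset ℕ :=
  if i = j then
    (if pyr p ρ (i + 1) (i + 2) = 1 then pairBeta p B ρ (i + 1) (i + 2)
     else oneBeta p B ρ (i + 1))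
  else
    if pyr p ρ i (j + 1) = 1 then pairBeta p B ρ i (j + 1)
    else if pyr p ρ i j = 1 then oneBeta p B ρ i
    else if pyr p ρ (i + 1) j = 1 then sqBeta p B ρ j
    else pairBeta p B ρ (i + 1) j

/-- The set of `p`-BG-partitions in the block of weight `w` with core `gam`:
self-conjugate partitions in the block none of whose diagonal hook lengths is
divisible by `p`. -/
def BGset (p w : ℕ) (gam : PartitionNat) : Set PartitionNat :=
  {lam | InBlock p w gam lam ∧ SelfConj lam ∧ ∀ i, lam.IsNode i i → ¬ p ∣ lam.hook i i}

open Finset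

namespace PartitionNat

variable {μ : PartitionNat} {N : ℕ}

lemma len_le_of_part_eq_zero {n : ℕ} (h : μ.part n = 0) : μ.len ≤ n := by
  have hsub : Function.support μ.part ⊆ ↑(range n) := by
    intro k hk
    by_contra hkn
    exact hk (Nat.eq_zero_of_le_zero (h ▸ μ.antitone (by simpa using hkn)))
  simpa [len] using Set.ncard_le_ncard hsub (range n).finite_toSet

lemma part_eq_zero_of_len_le {n : ℕ} (h : μ.len ≤ n) : μ.part n = 0 := by
  by_contra hne
  have hsub : ↑(range (n + 1)) ⊆ Function.support μ.part := by
    intro k hk h0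
    exact hne (Nat.eq_zero_of_le_zero (h0 ▸ μ.antitone (by simpa [Nat.lt_succ_iff] using hk)))
  have := Set.ncard_le_ncard hsub μ.finite_support
  simp only [Set.ncard_coe_finset, card_range] at this
  exact absurd (this.trans h) (by omega)

lemma mem_betaSet {x : ℕ} : x ∈ betaSet N μ ↔ ∃ k < N, μ.part k + (N - 1 - k) = x := by
  simp [betaSet]

lemma mem_betaSet_of_add_lt {x : ℕ} (h : x + μ.len < N) : x ∈ betaSet N μ :=
  mem_betaSet.mpr ⟨N - 1 - x, by omega, by rw [part_eq_zero_of_len_le (by omega)]; omega⟩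

lemma len_le_of_zero_mem_betaSet (h : 0 ∈ betaSet (N + 1) μ) : μ.len ≤ N := by
  obtain ⟨k, hk, hke⟩ := mem_betaSet.mp h
  obtain rfl : k = N := by omega
  exact len_le_of_part_eq_zero (by omega)

lemma beta_lt_beta {k l : ℕ} (hkl : k < l) (hl : l < N) :
    μ.part l + (N - 1 - l) < μ.part k + (N - 1 - k) := by
  have := μ.antitone hkl.le
  omega

lemma conj_le_of_part_le {j k : ℕ} (h : μ.part k ≤ j) : μ.conj j ≤ k := by
  have hsub : {i : ℕ | j + 1 ≤ μ.part i} ⊆ ↑(range k) := by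
    intro m hm
    by_contra hmk
    have := μ.antitone (show k ≤ m by simpa using hmk)
    simp only [Set.mem_ofPred_eq] at hm
    omega
  simpa [conj] using Set.ncard_le_ncard hsub (range k).finite_toSet

lemma conj_set_finite (j : ℕ) : {i : ℕ | j + 1 ≤ μ.part i}.Finite :=
  μ.finite_support.subset fun m (hm : j + 1 ≤ μ.part m) => by
    simp only [Function.mem_support]; omega

lemma lt_conj_of_lt_part {j k : ℕ} (h : j < μ.part k) : k < μ.conj j := by
  have hsub : ↑(range (k + 1)) ⊆ {i : ℕ | j + 1 ≤ μ.part i} := fun m hm =>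
    h.trans_le (μ.antitone (by simpa [Nat.lt_succ_iff] using hm))
  simpa [conj] using Set.ncard_le_ncard hsub (conj_set_finite j)

lemma conj_le_len (j : ℕ) : μ.conj j ≤ μ.len :=
  Set.ncard_le_ncard (fun m (hm : j + 1 ≤ μ.part m) => by
    simp only [Function.mem_support]; omega) μ.finite_support

lemma conj_antitone : Antitone μ.conj := fun a b hab =>
  Set.ncard_le_ncard (fun m (hm : b + 1 ≤ μ.part m) => by
    simp only [Set.mem_ofPred_eq]; omega) (conj_set_finite a)

/-- The gaps of `betaSet N μ` below its `i`-th bead are the `gap N j` with `j < μ.part i`, and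
the bead minus the gap is the hook length of `(i, j)`. -/
noncomputable def gap (μ : PartitionNat) (N j : ℕ) : ℕ := N + j - μ.conj j

lemma gap_not_mem_betaSet (j : ℕ) : μ.gap N j ∉ betaSet N μ := by
  intro hmem
  obtain ⟨k, hkN, hke⟩ := mem_betaSet.mp hmem
  have := conj_le_len (μ := μ) j
  rcases lt_or_ge j (μ.part k) with h | h
  · have := lt_conj_of_lt_part h
    unfold gap at hke
    omega
  · have := conj_le_of_part_le h
    unfold gap at hke
    omega

lemma gap_strictMono (hlen : μ.len ≤ N) : StrictMono (μ.gap N) := by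
  intro a b hab
  have := conj_antitone (μ := μ) hab.le
  have := conj_le_len (μ := μ) a
  unfold gap
  omega

lemma card_filter_mem_betaSet_lt {i : ℕ} (hi : i < N) :
    #((range (μ.part i + (N - 1 - i))).filter (· ∈ betaSet N μ)) = N - 1 - i := by
  have hbeads : (range (μ.part i + (N - 1 - i))).filter (· ∈ betaSet N μ)
      = (Ico (i + 1) N).image fun k => μ.part k + (N - 1 - k) := by
    ext x
    simp only [mem_filter, mem_range, mem_image, mem_Ico, mem_betaSet]
    constructor
    · rintro ⟨hxb, k, hkN, rfl⟩
      refine ⟨k, ⟨?_, hkN⟩, rfl⟩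
      by_contra hki
      have := μ.antitone (show k ≤ i by omega)
      omega
    · rintro ⟨k, ⟨hik, hkN⟩, rfl⟩
      exact ⟨beta_lt_beta (by omega) hkN, k, hkN, rfl⟩
  rw [hbeads, card_image_of_injOn, Nat.card_Ico]
  · omega
  · intro x hx y hy hxy
    simp only [coe_Ico, Set.mem_Ico] at hx hy
    by_contra hne
    rcases lt_or_gt_of_ne hne with h | h
    · exact (beta_lt_beta h hy.2).ne' hxy
    · exact (beta_lt_beta h hx.2).ne hxy

lemma image_gap_eq_filter_not_mem_betaSet (hlen : μ.len ≤ N) {i : ℕ} (hi : i < N) :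
    (range (μ.part i)).image (μ.gap N)
      = (range (μ.part i + (N - 1 - i))).filter (· ∉ betaSet N μ) := by
  have hcard : #((range (μ.part i + (N - 1 - i))).filter (· ∉ betaSet N μ)) = μ.part i := by
    have := card_filter_add_card_filter_not (s := range (μ.part i + (N - 1 - i)))
      (· ∈ betaSet N μ)
    rw [card_range, card_filter_mem_betaSet_lt hi] at this
    omega
  refine eq_of_subset_of_card_le (fun x hx => ?_) ?_
  · obtain ⟨j, hj, rfl⟩ := mem_image.mp hx
    have hj := mem_range.mp hj
    have := lt_conj_of_lt_part hj
    have := conj_le_len (μ := μ) j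
    simp only [mem_filter, mem_range]
    exact ⟨by unfold gap; omega, gap_not_mem_betaSet j⟩
  · rw [hcard, card_image_of_injective _ (gap_strictMono hlen).injective, card_range]

end PartitionNat

/-- A bead `b` with a gap at `b - p` would produce a node of hook length `p`. -/
theorem IsCore.sub_mem_betaSet {p : ℕ} {γ : PartitionNat} (hγ : IsCore p γ) {N : ℕ}
    (hlen : γ.len ≤ N) {b : ℕ} (hb : b ∈ betaSet N γ) (hpb : p ≤ b) :
    b - p ∈ betaSet N γ := by
  obtain ⟨i, hiN, rfl⟩ := mem_betaSet.mp hb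
  by_contra hgap
  have hp : 0 < p := Nat.pos_of_ne_zero (by rintro rfl; exact hgap hb)
  have hmem : γ.part i + (N - 1 - i) - p ∈ (range (γ.part i)).image (γ.gap N) := by
    rw [image_gap_eq_filter_not_mem_betaSet hlen hiN, mem_filter, mem_range]
    exact ⟨by omega, hgap⟩
  obtain ⟨j, hj, hje⟩ := mem_image.mp hmem
  have hj : j < γ.part i := mem_range.mp hj
  have := lt_conj_of_lt_part hj
  have := conj_le_len (μ := γ) j
  refine hγ i j hj ⟨1, ?_⟩
  unfold hook
  unfold gap at hje
  omega

/-- Removal of a `p`-rim-hook of leg length `l`, read on beta-sets. -/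
def BeadMove (p : ℕ) (S T : Finset ℕ) (l : ℕ) : Prop :=
  ∃ b ∈ S, p ≤ b ∧ b - p ∉ S ∧ T = insert (b - p) (S \ {b}) ∧
    l = #(S.filter fun x => b - p < x ∧ x < b)

/-- Passing from `N` to `N + 1` beads. -/
def shiftBeads (S : Finset ℕ) : Finset ℕ := insert 0 (S.image (· + 1))

lemma succ_mem_shiftBeads {S : Finset ℕ} {x : ℕ} : x + 1 ∈ shiftBeads S ↔ x ∈ S := by
  simp [shiftBeads]

lemma zero_mem_shiftBeads (S : Finset ℕ) : 0 ∈ shiftBeads S := mem_insert_self _ _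

lemma shiftBeads_injective : Function.Injective shiftBeads := fun S T h => by
  ext x
  rw [← succ_mem_shiftBeads, h, succ_mem_shiftBeads]

lemma shiftBeads_insert_sdiff (S : Finset ℕ) (a b : ℕ) :
    shiftBeads (insert a (S \ {b})) = insert (a + 1) (shiftBeads S \ {b + 1}) := by
  ext x
  rcases x with _ | x <;> simp [shiftBeads]

lemma card_filter_shiftBeads (S : Finset ℕ) (a b : ℕ) :
    #((shiftBeads S).filter fun x => a + 1 < x ∧ x < b + 1)
      = #(S.filter fun x => a < x ∧ x < b) := by
  rw [shiftBeads, filter_insert, if_neg (by omega), filter_image,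
    card_image_of_injective _ (add_left_injective 1)]
  congr 2
  ext x
  omega

lemma beadMove_shiftBeads_iff {p : ℕ} (hp : 0 < p) {S T : Finset ℕ} {l : ℕ} :
    BeadMove p (shiftBeads S) (shiftBeads T) l ↔ BeadMove p S T l := by
  constructor
  · rintro ⟨_ | b, hb, hpb, hgap, hT, rfl⟩
    · omega
    have hpb : p ≤ b := by
      by_contra h
      exact hgap (by rw [show b + 1 - p = 0 by omega]; exact zero_mem_shiftBeads S)
    rw [show b + 1 - p = b - p + 1 by omega] at hgap hT ⊢
    rw [← shiftBeads_insert_sdiff] at hT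
    exact ⟨b, succ_mem_shiftBeads.mp hb, hpb, mt succ_mem_shiftBeads.mpr hgap,
      shiftBeads_injective hT, card_filter_shiftBeads S _ _⟩
  · rintro ⟨b, hb, hpb, hgap, rfl, rfl⟩
    refine ⟨b + 1, succ_mem_shiftBeads.mpr hb, by omega, ?_, ?_, ?_⟩
    · rwa [show b + 1 - p = b - p + 1 by omega, succ_mem_shiftBeads]
    · rw [shiftBeads_insert_sdiff, show b + 1 - p = b - p + 1 by omega]
    · rw [show b + 1 - p = b - p + 1 by omega, card_filter_shiftBeads]

lemma zero_mem_of_beadMove_shiftBeads {p : ℕ} (hp : 0 < p) {S T : Finset ℕ} {l : ℕ}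
    (h : BeadMove p (shiftBeads S) T l) : 0 ∈ T := by
  obtain ⟨b, -, hpb, -, rfl, -⟩ := h
  exact mem_insert_of_mem (mem_sdiff.mpr ⟨zero_mem_shiftBeads S, by simp; omega⟩)

lemma PartitionNat.betaSet_succ {μ : PartitionNat} {N : ℕ} (h : μ.len ≤ N) :
    betaSet (N + 1) μ = shiftBeads (betaSet N μ) := by
  have hN := part_eq_zero_of_len_le h
  ext (_ | x)
  · simp only [zero_mem_shiftBeads, iff_true]
    exact mem_betaSet.mpr ⟨N, by omega, by omega⟩
  · rw [succ_mem_shiftBeads, mem_betaSet, mem_betaSet]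
    constructor
    · rintro ⟨k, hk, hkx⟩
      have : k ≠ N := by rintro rfl; omega
      exact ⟨k, by omega, by omega⟩
    · rintro ⟨k, hk, hkx⟩
      exact ⟨k, by omega, by omega⟩

theorem RemoveHook.beadMove {p : ℕ} (hp : 0 < p) {lam mu : PartitionNat} {l : ℕ}
    (h : RemoveHook p lam mu l) {N : ℕ} (hN : lam.len ≤ N) :
    mu.len ≤ N ∧ BeadMove p (betaSet N lam) (betaSet N mu) l := by
  let Q M := mu.len ≤ M ∧ BeadMove p (betaSet M lam) (betaSet M mu) l
  have step : ∀ M, lam.len ≤ M → (Q (M + 1) ↔ Q M) := by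
    intro M hM
    simp only [Q, betaSet_succ hM]
    constructor
    · rintro ⟨-, hmove⟩
      have hmu := len_le_of_zero_mem_betaSet (zero_mem_of_beadMove_shiftBeads hp hmove)
      rw [betaSet_succ hmu, beadMove_shiftBeads_iff hp] at hmove
      exact ⟨hmu, hmove⟩
    · rintro ⟨hmu, hmove⟩
      rw [betaSet_succ hmu, beadMove_shiftBeads_iff hp]
      exact ⟨by omega, hmove⟩
  have transport : ∀ M, lam.len ≤ M → (Q M ↔ Q lam.len) := by
    intro M hM
    induction M, hM using Nat.le_induction with
    | base => rfl
    | succ M hM ih => rw [step M hM, ih]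
  obtain ⟨N₀, b, hlam, hmu, hmove⟩ := h
  exact (transport N hN).mpr ((transport N₀ hlam).mp ⟨hmu, b, hmove⟩)

lemma Nat.eq_of_mod_eq_of_le_of_lt_add {p x y : ℕ} (hmod : x % p = y % p) (hxy : x ≤ y)
    (hyx : y < x + p) : x = y := by
  have hdvd : p ∣ y - x := Nat.dvd_of_mod_eq_zero (Nat.sub_mod_eq_zero_of_mod_eq hmod.symm)
  have := Nat.eq_zero_of_dvd_of_lt hdvd (by omega)
  omega

lemma card_filter_sdiff_union {B D A : Finset ℕ} (hD : D ⊆ B) (hA : Disjoint A B)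
    (P : ℕ → Prop) [DecidablePred P] :
    #((B \ D ∪ A).filter P) + #(D.filter P) = #(B.filter P) + #(A.filter P) := by
  have hsdiff : (B \ D).filter P = B.filter P \ D.filter P := by
    ext x
    simp only [mem_filter, mem_sdiff]
    tauto
  rw [filter_union, card_union_of_disjoint
    (disjoint_filter_filter (hA.symm.mono_left sdiff_subset)), hsdiff]
  have := card_sdiff_add_card_eq_card (filter_subset_filter P hD)
  omega

lemma card_filter_pair {a b : ℕ} (h : a ≠ b) (P : ℕ → Prop) [DecidablePred P] :
    #(({a, b} : Finset ℕ).filter P) = (if P a then 1 else 0) + (if P b then 1 else 0) := by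
  rw [card_filter, sum_pair h]

lemma mem_or_sub_mem_of_gap {p b : ℕ} {B D A : Finset ℕ} (hB : ∀ b ∈ B, p ≤ b → b - p ∈ B)
    (hb : b ∈ B \ D ∪ A) (hpb : p ≤ b) (hgap : b - p ∉ B \ D ∪ A) : b ∈ A ∨ b - p ∈ D := by
  simp only [mem_union, mem_sdiff] at hb hgap
  by_cases hbA : b ∈ A
  · exact Or.inl hbA
  · by_contra h
    exact hgap (Or.inl ⟨hB b (hb.resolve_right hbA).1 hpb, fun hD => h (Or.inr hD)⟩)

def weightOneBeta (p : ℕ) (B : Finset ℕ) (ρ : ℕ → ℕ) (w : ℕ) : Finset ℕ :=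
  (B \ {ρ w}) ∪ {ρ w + p}

lemma lt_of_pyr_eq_one {p a b : ℕ} {ρ : ℕ → ℕ} (hab : a ≤ b) (h : pyr p ρ a b = 1) : b < p := by
  unfold pyr at h
  split_ifs at h <;> omega

lemma pyr_eq_zero_of_ne_one {p a b : ℕ} {ρ : ℕ → ℕ} (h : pyr p ρ a b ≠ 1) : pyr p ρ a b = 0 := by
  unfold pyr at h ⊢
  split_ifs at h ⊢ <;> trivial

/-- `B` is a beta-set closed under `b ↦ b - p` (the abacus of a `p`-core), and
`ρ 0 < ⋯ < ρ (p - 1)` are the last beads on its `p` runners. -/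
structure IsCoreAbacus (p : ℕ) (B : Finset ℕ) (ρ : ℕ → ℕ) : Prop where
  sub_mem : ∀ b ∈ B, p ≤ b → b - p ∈ B
  rho_lt_rho : ∀ i j, i < j → j < p → ρ i < ρ j
  rho_mem : ∀ i < p, ρ i ∈ B
  le_rho : ∀ i < p, ∀ b ∈ B, b % p = ρ i % p → b ≤ ρ i
  exists_rho_mod_eq : ∀ r < p, ∃ i < p, ρ i % p = r
  p_le_rho : ∀ i < p, p ≤ ρ i

theorem isCoreAbacus_betaSet {p N : ℕ} {γ : PartitionNat} {ρ : ℕ → ℕ} (hγ : IsCore p γ)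
    (hN : γ.len + 2 * p ≤ N) (hρ : IsRho p N γ ρ) : IsCoreAbacus p (betaSet N γ) ρ where
  sub_mem _ hb hpb := IsCore.sub_mem_betaSet hγ (by omega) hb hpb
  rho_lt_rho := hρ.1
  rho_mem i hi := (hρ.2.1 i hi).1
  le_rho i hi := (hρ.2.1 i hi).2
  exists_rho_mod_eq := hρ.2.2
  p_le_rho i hi := by
    have hmem : p + ρ i % p ∈ betaSet N γ :=
      mem_betaSet_of_add_lt (by have := Nat.mod_lt (ρ i) (show 0 < p by omega); omega)
    have := (hρ.2.1 i hi).2 _ hmem (by simp)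
    omega

namespace IsCoreAbacus

variable {p : ℕ} {B : Finset ℕ} {ρ : ℕ → ℕ}

lemma rho_le_rho (A : IsCoreAbacus p B ρ) {k m : ℕ} (hkm : k ≤ m) (hm : m < p) : ρ k ≤ ρ m := by
  rcases hkm.eq_or_lt with rfl | h
  · rfl
  · exact (A.rho_lt_rho k m h hm).le

lemma eq_of_rho_mod_eq (A : IsCoreAbacus p B ρ) {k m : ℕ} (hk : k < p) (hm : m < p)
    (h : ρ k % p = ρ m % p) : k = m := by
  by_contra hne
  rcases lt_or_gt_of_ne hne with hkm | hkm
  · exact (A.rho_lt_rho k m hkm hm).not_ge (A.le_rho k hk _ (A.rho_mem m hm) h.symm)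
  · exact (A.rho_lt_rho m k hkm hk).not_ge (A.le_rho m hm _ (A.rho_mem k hk) h)

lemma rho_add_mul_not_mem (A : IsCoreAbacus p B ρ) {m c : ℕ} (hm : m < p) (hc : 0 < c) :
    ρ m + c * p ∉ B := fun hmem => by
  have := A.le_rho m hm _ hmem (by simp)
  have := Nat.mul_le_mul_right p hc
  omega

lemma rho_add_not_mem (A : IsCoreAbacus p B ρ) {m : ℕ} (hm : m < p) : ρ m + p ∉ B := by
  simpa using A.rho_add_mul_not_mem hm one_pos

lemma mem_of_mod_eq_of_le (A : IsCoreAbacus p B ρ) {k x : ℕ} (hk : k < p)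
    (hx : x % p = ρ k % p) (hle : x ≤ ρ k) : x ∈ B := by
  have descend : ∀ c y, y + p * c ∈ B → y ∈ B := by
    intro c
    induction c with
    | zero => simp
    | succ c ih =>
      intro y hy
      rw [Nat.mul_succ, ← add_assoc] at hy
      exact ih y (by simpa using A.sub_mem _ hy (by omega))
  obtain ⟨c, hc⟩ := (Nat.modEq_iff_dvd' hle).mp hx
  exact descend c x (by rw [← hc]; simpa [Nat.add_sub_cancel' hle] using A.rho_mem k hk)

/-- The window `(a, a + p)` meets every runner except that of `a` once, and the meeting point is
a bead iff the runner's last bead lies beyond `a`. -/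
theorem card_window_eq (A : IsCoreAbacus p B ρ) (hp : 0 < p) (a : ℕ) :
    #(B.filter fun x => a < x ∧ x < a + p)
      = #((range p).filter fun k => a < ρ k ∧ ρ k % p ≠ a % p) := by
  -- the representative in `(a, a + p]` of the residue class of `y`
  have rep : ∀ y, a < y → ∃ r, a < r ∧ r ≤ a + p ∧ r ≤ y ∧ r % p = y % p := fun y hy =>
    ⟨a + 1 + (y - (a + 1)) % p, by omega, by have := Nat.mod_lt (y - (a + 1)) hp; omega,
      by have := Nat.mod_le (y - (a + 1)) p; omega,
      by rw [Nat.add_mod, Nat.mod_mod, ← Nat.add_mod, Nat.add_sub_cancel' hy]⟩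
  choose! r hr using rep
  symm
  apply card_bij (fun k _ => r (ρ k))
  · intro k hk
    simp only [mem_filter, mem_range] at hk ⊢
    obtain ⟨hkp, hak, hmod⟩ := hk
    obtain ⟨h1, h2, h3, h4⟩ := hr _ hak
    have : r (ρ k) ≠ a + p := fun h => hmod (by rw [← h4, h, Nat.add_mod_right])
    exact ⟨A.mem_of_mod_eq_of_le hkp h4 h3, h1, by omega⟩
  · intro k hk m hm hkm
    simp only [mem_filter, mem_range] at hk hm
    exact A.eq_of_rho_mod_eq hk.1 hm.1 (by rw [← (hr _ hk.2.1).2.2.2, hkm, (hr _ hm.2.1).2.2.2])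
  · intro x hx
    simp only [mem_filter] at hx
    obtain ⟨hxB, hax, hxa⟩ := hx
    obtain ⟨k, hkp, hk⟩ := A.exists_rho_mod_eq (x % p) (Nat.mod_lt x hp)
    have hxk := A.le_rho k hkp x hxB hk.symm
    have hres : ρ k % p ≠ a % p := fun h => by
      have := Nat.eq_of_mod_eq_of_le_of_lt_add (h.symm.trans hk) hax.le (by omega)
      omega
    obtain ⟨h1, h2, -, h4⟩ := hr _ (show a < ρ k by omega)
    refine ⟨k, mem_filter.mpr ⟨mem_range.mpr hkp, by omega, hres⟩, ?_⟩
    rcases le_total (r (ρ k)) x with h | h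
    · exact Nat.eq_of_mod_eq_of_le_of_lt_add (h4.trans hk) h (by omega)
    · exact (Nat.eq_of_mod_eq_of_le_of_lt_add (hk.symm.trans h4.symm) h (by omega)).symm

theorem card_window (A : IsCoreAbacus p B ρ) {a t w : ℕ} (ht : t ≤ p)
    (hthr : ∀ k < p, a < ρ k ↔ t ≤ k) (hw : w < p) (hmod : ρ w % p = a % p) :
    #(B.filter fun x => a < x ∧ x < a + p) = p - t - if t ≤ w then 1 else 0 := by
  have hrunners : (range p).filter (fun k => a < ρ k ∧ ρ k % p ≠ a % p) = (Ico t p).erase w := by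
    ext k
    simp only [mem_filter, mem_range, mem_erase, mem_Ico]
    constructor
    · rintro ⟨hk, hak, hka⟩
      exact ⟨by rintro rfl; exact hka hmod, (hthr k hk).mp hak, hk⟩
    · rintro ⟨hkw, htk, hk⟩
      exact ⟨hk, (hthr k hk).mpr htk, fun h => hkw (A.eq_of_rho_mod_eq hk hw (h.trans hmod.symm))⟩
  rw [A.card_window_eq (by omega), hrunners, card_erase_eq_ite, Nat.card_Ico]
  simp only [mem_Ico]
  split_ifs <;> omega

lemma lt_rho_iff (A : IsCoreAbacus p B ρ) {a t : ℕ} (hlo : ∀ k < t, ρ k ≤ a)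
    (hhi : t < p → a < ρ t) {k : ℕ} (hk : k < p) : a < ρ k ↔ t ≤ k := by
  constructor
  · intro h
    by_contra hkt
    exact (hlo k (by omega)).not_gt h
  · intro htk
    exact (hhi (by omega)).trans_le (A.rho_le_rho htk hk)

lemma card_window_rho (A : IsCoreAbacus p B ρ) {m : ℕ} (hm : m < p) :
    #(B.filter fun x => ρ m < x ∧ x < ρ m + p) = p - 1 - m := by
  rw [A.card_window (t := m + 1) (by omega) (fun k hk => A.lt_rho_iff
    (fun k hk => A.rho_le_rho (by omega) hm) (fun h => A.rho_lt_rho m _ (by omega) h) hk) hm rfl,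
    if_neg (by omega)]
  omega

theorem leg_of_beadMove_weightOneBeta (A : IsCoreAbacus p B ρ) {w l : ℕ} {T : Finset ℕ}
    (hw : w < p) (h : BeadMove p (weightOneBeta p B ρ w) T l) : l = p - 1 - w := by
  obtain ⟨b, hb, hpb, hgap, -, rfl⟩ := h
  obtain rfl : b = ρ w + p := by
    rcases mem_or_sub_mem_of_gap A.sub_mem hb hpb hgap with h | h <;>
      rw [mem_singleton] at h <;> omega
  have hcount := card_filter_sdiff_union (singleton_subset_iff.mpr (A.rho_mem w hw))
    (disjoint_singleton_left.mpr (A.rho_add_not_mem hw)) fun x => ρ w < x ∧ x < ρ w + p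
  simp only [filter_singleton, A.card_window_rho hw, lt_irrefl, false_and, and_false,
    if_false, card_empty] at hcount
  rw [weightOneBeta, Nat.add_sub_cancel]
  omega

theorem legDiff_pairBeta (A : IsCoreAbacus p B ρ) {u v l₁ l₂ : ℕ} {T U : Finset ℕ}
    (huv : u < v) (hv : v < p) (h₁ : BeadMove p (pairBeta p B ρ u v) T l₁)
    (h₂ : BeadMove p T U l₂) :
    (max l₁ l₂ - min l₁ l₂ : ℤ) = v - u - if ρ v < ρ u + p then 1 else 0 := by
  have hu : u < p := huv.trans hv
  have hρ := A.rho_lt_rho u v huv hv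
  have hDB : {ρ u, ρ v} ⊆ B := by simp [insert_subset_iff, A.rho_mem u hu, A.rho_mem v hv]
  have hAB : Disjoint {ρ u + p, ρ v + p} B := by
    simp [disjoint_insert_left, A.rho_add_not_mem hu, A.rho_add_not_mem hv]
  obtain ⟨b, hb, hpb, hgap, rfl, rfl⟩ := h₁
  have hb' : b = ρ u + p ∨ b = ρ v + p := by
    rcases mem_or_sub_mem_of_gap A.sub_mem hb hpb hgap with h | h <;>
      simp only [mem_insert, mem_singleton] at h <;> omega
  have hcount := card_filter_sdiff_union hDB hAB fun x => b - p < x ∧ x < b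
  rw [card_filter_pair (by omega), card_filter_pair (by omega)] at hcount
  have huB := A.rho_mem u hu
  have hvB := A.rho_mem v hv
  have hupB := A.rho_add_not_mem hu
  have hvpB := A.rho_add_not_mem hv
  rcases hb' with rfl | rfl
  · have hT : insert (ρ u + p - p) (pairBeta p B ρ u v \ {ρ u + p}) = weightOneBeta p B ρ v := by
      ext x
      simp only [pairBeta, weightOneBeta, mem_insert, mem_union, mem_sdiff, mem_singleton,
        Nat.add_sub_cancel]
      grind
    rw [hT] at h₂
    rw [A.leg_of_beadMove_weightOneBeta hv h₂, pairBeta]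
    simp only [Nat.add_sub_cancel, A.card_window_rho hu] at hcount ⊢
    split_ifs at hcount ⊢ <;> omega
  · have hT : insert (ρ v + p - p) (pairBeta p B ρ u v \ {ρ v + p}) = weightOneBeta p B ρ u := by
      ext x
      simp only [pairBeta, weightOneBeta, mem_insert, mem_union, mem_sdiff, mem_singleton,
        Nat.add_sub_cancel]
      grind
    rw [hT] at h₂
    rw [A.leg_of_beadMove_weightOneBeta hu h₂, pairBeta]
    simp only [Nat.add_sub_cancel, A.card_window_rho hv] at hcount ⊢
    split_ifs at hcount ⊢ <;> omega

theorem legDiff_oneBeta (A : IsCoreAbacus p B ρ) {u t l₁ l₂ : ℕ} {T U : Finset ℕ}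
    (hut : u < t) (ht : t ≤ p) (hthr : ∀ k < p, ρ u + p < ρ k ↔ t ≤ k)
    (h₁ : BeadMove p (oneBeta p B ρ u) T l₁) (h₂ : BeadMove p T U l₂) :
    (max l₁ l₂ - min l₁ l₂ : ℤ) = t - u - 1 := by
  have hu : u < p := by omega
  have huB := A.rho_mem u hu
  have hupB := A.rho_add_not_mem hu
  have hu2pB : ρ u + 2 * p ∉ B := A.rho_add_mul_not_mem hu two_pos
  obtain ⟨b, hb, hpb, hgap, rfl, rfl⟩ := h₁
  obtain rfl : b = ρ u + 2 * p := by
    rcases mem_or_sub_mem_of_gap A.sub_mem hb hpb hgap with h | h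
    · exact mem_singleton.mp h
    · obtain rfl : b = ρ u + p := by rw [mem_singleton] at h; omega
      simp only [oneBeta, mem_union, mem_sdiff, mem_singleton] at hb
      rcases hb with ⟨hb, -⟩ | hb
      · exact absurd hb hupB
      · omega
  have hT : insert (ρ u + 2 * p - p) (oneBeta p B ρ u \ {ρ u + 2 * p}) = weightOneBeta p B ρ u := by
    ext x
    simp only [oneBeta, weightOneBeta, mem_insert, mem_union, mem_sdiff, mem_singleton]
    grind
  rw [hT] at h₂
  rw [A.leg_of_beadMove_weightOneBeta hu h₂]
  have hwin : #(B.filter fun x => ρ u + 2 * p - p < x ∧ x < ρ u + 2 * p) = p - t := by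
    rw [show ρ u + 2 * p - p = ρ u + p by omega, show ρ u + 2 * p = ρ u + p + p by omega,
      A.card_window ht hthr hu (by simp), if_neg (by omega), Nat.sub_zero]
  have hcount := card_filter_sdiff_union (singleton_subset_iff.mpr huB)
    (disjoint_singleton_left.mpr hu2pB) fun x => ρ u + 2 * p - p < x ∧ x < ρ u + 2 * p
  rw [filter_singleton, filter_singleton, if_neg (by omega), if_neg (by omega), hwin] at hcount
  simp only [card_empty, add_zero] at hcount
  rw [oneBeta, hcount]
  omega

theorem legDiff_sqBeta (A : IsCoreAbacus p B ρ) {w t l₁ l₂ : ℕ} {T U : Finset ℕ}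
    (htw : t ≤ w) (hw : w < p) (hthr : ∀ k < p, ρ w - p < ρ k ↔ t ≤ k)
    (h₁ : BeadMove p (sqBeta p B ρ w) T l₁) (h₂ : BeadMove p T U l₂) :
    (max l₁ l₂ - min l₁ l₂ : ℤ) = w - t := by
  have hwB := A.rho_mem w hw
  have hwpB := A.rho_add_not_mem hw
  have hpw := A.p_le_rho w hw
  obtain ⟨b, hb, hpb, hgap, rfl, rfl⟩ := h₁
  obtain rfl : b = ρ w := by
    rcases mem_or_sub_mem_of_gap A.sub_mem hb hpb hgap with h | h
    · rw [mem_singleton] at h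
      subst h
      rw [Nat.add_sub_cancel] at hgap
      exact absurd (mem_union_left _ (mem_sdiff.mpr ⟨hwB, mem_singleton.not.mpr (by omega)⟩)) hgap
    · rw [mem_singleton] at h
      omega
  have hT : insert (ρ w - p) (sqBeta p B ρ w \ {ρ w}) = weightOneBeta p B ρ w := by
    have := A.sub_mem _ hwB hpw
    ext x
    simp only [sqBeta, weightOneBeta, mem_insert, mem_union, mem_sdiff, mem_singleton]
    grind
  rw [hT] at h₂
  rw [A.leg_of_beadMove_weightOneBeta hw h₂]
  have hwin := A.card_window (by omega) hthr hw
    (by conv_lhs => rw [← Nat.sub_add_cancel hpw, Nat.add_mod_right])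
  rw [Nat.sub_add_cancel hpw, if_pos htw] at hwin
  have hcount := card_filter_sdiff_union (singleton_subset_iff.mpr (A.sub_mem _ hwB hpw))
    (disjoint_singleton_left.mpr hwpB) fun x => ρ w - p < x ∧ x < ρ w
  rw [filter_singleton, filter_singleton, if_neg (by omega), if_neg (by omega), hwin] at hcount
  simp only [card_empty, add_zero] at hcount
  rw [sqBeta, hcount]
  omega

lemma pyr_eq_one_iff (A : IsCoreAbacus p B ρ) {a b : ℕ} (hab : a ≤ b) (hb : b < p) :
    pyr p ρ a b = 1 ↔ ρ b < ρ a + p := by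
  have := A.rho_le_rho hab hb
  unfold pyr
  rw [if_neg (by omega), if_neg (by omega)]
  split_ifs <;> simp only [true_iff, false_iff, not_lt] <;> omega

lemma pyr_self (A : IsCoreAbacus p B ρ) {a : ℕ} (ha : a < p) : pyr p ρ a a = 1 :=
  (A.pyr_eq_one_iff le_rfl ha).mpr (by omega)

lemma add_lt_rho_of_pyr_ne_one (A : IsCoreAbacus p B ρ) {a b : ℕ} (hab : a < b) (hb : b < p)
    (h : pyr p ρ a b ≠ 1) : ρ a + p < ρ b := by
  have hle : ρ a + p ≤ ρ b := not_lt.mp (mt (A.pyr_eq_one_iff hab.le hb).mpr h)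
  refine hle.lt_of_ne fun heq => hab.ne' (A.eq_of_rho_mod_eq hb (hab.trans hb) ?_)
  rw [← heq, Nat.add_mod_right]

theorem legDiff_fayersBeta_self (A : IsCoreAbacus p B ρ) {i l₁ l₂ : ℕ} {T U : Finset ℕ}
    (hi : i + 1 < p) (h₁ : BeadMove p (fayersBeta p B ρ i i) T l₁) (h₂ : BeadMove p T U l₂) :
    (max l₁ l₂ - min l₁ l₂ : ℤ) = 0 := by
  rw [fayersBeta, if_pos rfl] at h₁
  by_cases hc : pyr p ρ (i + 1) (i + 2) = 1
  · rw [if_pos hc] at h₁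
    have hi2 := lt_of_pyr_eq_one (by omega) hc
    rw [A.legDiff_pairBeta (by omega) hi2 h₁ h₂, if_pos ((A.pyr_eq_one_iff (by omega) hi2).mp hc)]
    push_cast
    ring
  · rw [if_neg hc] at h₁
    have hthr := fun k (hk : k < p) => A.lt_rho_iff (a := ρ (i + 1) + p) (t := i + 2)
      (fun k hk => (A.rho_le_rho (by omega) hi).trans (by omega))
      (fun hi2 => A.add_lt_rho_of_pyr_ne_one (by omega) hi2 hc) hk
    rw [A.legDiff_oneBeta (by omega) (by omega) hthr h₁ h₂]
    push_cast
    ring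

theorem legDiff_fayersBeta_of_lt (A : IsCoreAbacus p B ρ) {i j l₁ l₂ : ℕ} {T U : Finset ℕ}
    (hij : i < j) (hj : j < p) (h₁ : BeadMove p (fayersBeta p B ρ i j) T l₁)
    (h₂ : BeadMove p T U l₂) :
    (max l₁ l₂ - min l₁ l₂ : ℤ) = j - i - 1 + pyr p ρ i j := by
  rw [fayersBeta, if_neg hij.ne] at h₁
  by_cases hc₁ : pyr p ρ i (j + 1) = 1
  · rw [if_pos hc₁] at h₁
    have hj1 := lt_of_pyr_eq_one (by omega) hc₁
    have hclose := (A.pyr_eq_one_iff (by omega) hj1).mp hc₁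
    have hpyr : pyr p ρ i j = 1 :=
      (A.pyr_eq_one_iff hij.le hj).mpr ((A.rho_le_rho (by omega) hj1).trans_lt hclose)
    rw [A.legDiff_pairBeta (by omega) hj1 h₁ h₂, if_pos hclose, hpyr]
    push_cast
    ring
  rw [if_neg hc₁] at h₁
  by_cases hc₂ : pyr p ρ i j = 1
  · rw [if_pos hc₂] at h₁
    have hthr := fun k (hk : k < p) => A.lt_rho_iff (a := ρ i + p) (t := j + 1)
      (fun k hk => (A.rho_le_rho (by omega) hj).trans ((A.pyr_eq_one_iff hij.le hj).mp hc₂).le)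
      (fun hj1 => A.add_lt_rho_of_pyr_ne_one (by omega) hj1 hc₁) hk
    rw [A.legDiff_oneBeta (by omega) (by omega) hthr h₁ h₂, hc₂]
    push_cast
    ring
  rw [if_neg hc₂] at h₁
  have hfar := A.add_lt_rho_of_pyr_ne_one hij hj hc₂
  rw [pyr_eq_zero_of_ne_one hc₂]
  by_cases hc₃ : pyr p ρ (i + 1) j = 1
  · rw [if_pos hc₃] at h₁
    have hthr := fun k (hk : k < p) => A.lt_rho_iff (a := ρ j - p) (t := i + 1)
      (fun k hk => (A.rho_le_rho (by omega) (hij.trans hj)).trans (by omega))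
      (fun _ => by have := (A.pyr_eq_one_iff (by omega) hj).mp hc₃; omega) hk
    rw [A.legDiff_sqBeta (by omega) hj hthr h₁ h₂]
    push_cast
    ring
  · rw [if_neg hc₃] at h₁
    have hi1j : i + 1 < j := by
      refine lt_of_le_of_ne hij fun h => hc₃ ?_
      rw [h]
      exact A.pyr_self hj
    rw [A.legDiff_pairBeta hi1j hj h₁ h₂,
      if_neg (not_lt.mpr (A.add_lt_rho_of_pyr_ne_one hi1j hj hc₃).le)]
    push_cast
    ring

end IsCoreAbacus

theorem stmt12_general (p : ℕ)
    (γ : PartitionNat) (hγ : IsCore p γ)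
    (N : ℕ) (hNlen : γ.len + 2 * p ≤ N)
    (ρ : ℕ → ℕ) (hρ : IsRho p N γ ρ)
    (i j : ℕ) (hij : i ≤ j) (hj : j ≤ p - 1) (hi : i < p - 1)
    (lam : PartitionNat) (hlen : lam.len ≤ N)
    (hβ : betaSet N lam = fayersBeta p (betaSet N γ) ρ i j) :
    ∀ μ l1 l2, RemoveHook p lam μ l1 → RemoveHook p μ γ l2 →
      ((max l1 l2 - min l1 l2 : ℤ) = (j : ℤ) - (i : ℤ) - 1 + (pyr p ρ i j : ℤ)) := by
  intro μ l1 l2 h1 h2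
  have hp : 0 < p := by omega
  have A := isCoreAbacus_betaSet hγ hNlen hρ
  obtain ⟨hμ, hmove₁⟩ := h1.beadMove hp hlen
  obtain ⟨-, hmove₂⟩ := h2.beadMove hp hμ
  rw [hβ] at hmove₁
  rcases hij.eq_or_lt with rfl | hij
  · rw [A.legDiff_fayersBeta_self (by omega) hmove₁ hmove₂, A.pyr_self (by omega)]
    push_cast
    ring
  · exact A.legDiff_fayersBeta_of_lt hij (by omega) hmove₁ hmove₂

/-- `∂⌈i,j⌋ = j − i − 1 + γ_{ij}`: every two-step `p`-rim-hook
removal sequence from `⌈i,j⌋` down to `γ` has leg lengths `l₁, l₂` with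
`|l₁ − l₂| = j − i − 1 + γ_{ij}`. -/
theorem stmt12 (p : ℕ) (hp : p.Prime) (hodd : Odd p)
    (γ : PartitionNat) (hγ : IsCore p γ) (hsc : SelfConj γ)
    (N : ℕ) (hN : p ∣ N) (hNlen : γ.len + 2 * p ≤ N)
    (ρ : ℕ → ℕ) (hρ : IsRho p N γ ρ)
    (i j : ℕ) (hij : i ≤ j) (hj : j ≤ p - 1) (hi : i < p - 1)
    (lam : PartitionNat) (hlen : lam.len ≤ N)
    (hβ : betaSet N lam = fayersBeta p (betaSet N γ) ρ i j) :
    ∀ μ l1 l2, RemoveHook p lam μ l1 → RemoveHook p μ γ l2 →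
      ((max l1 l2 - min l1 l2 : ℤ) = (j : ℤ) - (i : ℤ) - 1 + (pyr p ρ i j : ℤ)) :=
  stmt12_general p γ hγ N hNlen ρ hρ i j hij hj hi lam hlen hβ

end ArxivW2
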